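/- Two binary cubic forms g₁, g₂ over K with the same nonzero discriminant are GL(2,K)-equivalent (under the twisted action) if and only if g₂ is SL(2,K)-equivalent to either g₁(X,Y) or g₁(X,−Y). -/
import Mathlib


/-- Discriminant of the binary cubic `aX³+bX²Y+cXY²+dY³`. -/
def cubicDisc {K : Type*} [CommRing K] (a b c d : K) : K :=
  b^2*c^2 - 4*a*c^3 - 4*b^3*d - 27*a^2*d^2 + 18*a*b*c*d

/-- Coefficient of `X³` in `g(rX+tY, sX+uY)`. -/
def tA {K : Type*} [CommRing K] (a b c d r s t u : K) : K :=
  a*r^3 + b*r^2*s + c*r*s^2 + d*s^3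

/-- Coefficient of `X²Y` in `g(rX+tY, sX+uY)`. -/
def tB {K : Type*} [CommRing K] (a b c d r s t u : K) : K :=
  3*a*r^2*t + b*(r^2*u + 2*r*s*t) + c*(2*r*s*u + s^2*t) + 3*d*s^2*u

/-- Coefficient of `XY²` in `g(rX+tY, sX+uY)`. -/
def tC {K : Type*} [CommRing K] (a b c d r s t u : K) : K :=
  3*a*r*t^2 + b*(2*r*t*u + s*t^2) + c*(r*u^2 + 2*s*t*u) + 3*d*s*u^2

/-- Coefficient of `Y³` in `g(rX+tY, sX+uY)`. -/
def tD {K : Type*} [CommRing K] (a b c d r s t u : K) : K :=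
  a*t^3 + b*t^2*u + c*t*u^2 + d*u^3

/-- Covariance of the discriminant under substitution. -/
theorem disc_cov {K : Type*} [CommRing K] (a b c d r s t u : K) :
    cubicDisc (tA a b c d r s t u) (tB a b c d r s t u) (tC a b c d r s t u)
        (tD a b c d r s t u)
      = (r*u - s*t)^6 * cubicDisc a b c d := by
  simp only [cubicDisc, tA, tB, tC, tD]; ring

theorem tA_neg {K : Type*} [CommRing K] (a b c d r s t u : K) :
    tA a (-b) c (-d) (-r) s (-t) u = -(tA a b c d r s t u) := by
  simp only [tA]; ring

theorem tB_neg {K : Type*} [CommRing K] (a b c d r s t u : K) :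
    tB a (-b) c (-d) (-r) s (-t) u = -(tB a b c d r s t u) := by
  simp only [tB]; ring

theorem tC_neg {K : Type*} [CommRing K] (a b c d r s t u : K) :
    tC a (-b) c (-d) (-r) s (-t) u = -(tC a b c d r s t u) := by
  simp only [tC]; ring

theorem tD_neg {K : Type*} [CommRing K] (a b c d r s t u : K) :
    tD a (-b) c (-d) (-r) s (-t) u = -(tD a b c d r s t u) := by
  simp only [tD]; ring

/-- Two binary cubics `g₁,g₂` with the same nonzero discriminant are
`GL(2,K)`-equivalent under the twisted action (`g^M = det(M)⁻¹·g((X Y)M)`,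
expressed below by clearing the determinant: `g₁((X Y)M) = det(M)·g₂`) if and
only if `g₂` is `SL(2,K)`-equivalent to `g₁(X,Y)` or to `g₁(X,−Y)` (the latter
having coefficients `(a₁,−b₁,c₁,−d₁)`). -/
theorem GL2_equiv_iff_SL2_equiv {K : Type*} [Field K]
    (h2 : (2:K) ≠ 0) (h3 : (3:K) ≠ 0)
    (a₁ b₁ c₁ d₁ a₂ b₂ c₂ d₂ : K)
    (hΔeq : cubicDisc a₁ b₁ c₁ d₁ = cubicDisc a₂ b₂ c₂ d₂)
    (hΔ : cubicDisc a₁ b₁ c₁ d₁ ≠ 0) :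
    (∃ r s t u : K, r*u - s*t ≠ 0 ∧
        tA a₁ b₁ c₁ d₁ r s t u = (r*u - s*t)*a₂ ∧
        tB a₁ b₁ c₁ d₁ r s t u = (r*u - s*t)*b₂ ∧
        tC a₁ b₁ c₁ d₁ r s t u = (r*u - s*t)*c₂ ∧
        tD a₁ b₁ c₁ d₁ r s t u = (r*u - s*t)*d₂)
    ↔ ((∃ r s t u : K, r*u - s*t = 1 ∧
          tA a₁ b₁ c₁ d₁ r s t u = a₂ ∧
          tB a₁ b₁ c₁ d₁ r s t u = b₂ ∧
          tC a₁ b₁ c₁ d₁ r s t u = c₂ ∧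
          tD a₁ b₁ c₁ d₁ r s t u = d₂)
      ∨ (∃ r s t u : K, r*u - s*t = 1 ∧
          tA a₁ (-b₁) c₁ (-d₁) r s t u = a₂ ∧
          tB a₁ (-b₁) c₁ (-d₁) r s t u = b₂ ∧
          tC a₁ (-b₁) c₁ (-d₁) r s t u = c₂ ∧
          tD a₁ (-b₁) c₁ (-d₁) r s t u = d₂)) := by
  constructor
  · rintro ⟨r, s, t, u, hδ, hA, hB, hC, hD⟩
    set δ := r*u - s*t with hδdef
    have hcov := disc_cov a₁ b₁ c₁ d₁ r s t u
    rw [hA, hB, hC, hD] at hcov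
    have hdisc2 : cubicDisc (δ*a₂) (δ*b₂) (δ*c₂) (δ*d₂)
        = δ^4 * cubicDisc a₂ b₂ c₂ d₂ := by
      simp only [cubicDisc]; ring
    rw [hdisc2, ← hΔeq] at hcov
    have hsq : δ^2 = 1 := by
      have h1 : δ^4 * (δ^2 - 1) * cubicDisc a₁ b₁ c₁ d₁ = 0 := by
        linear_combination -hcov
      rcases mul_eq_zero.mp h1 with h | h
      · rcases mul_eq_zero.mp h with h' | h'
        · exact absurd h' (pow_ne_zero 4 hδ)
        · linear_combination h'
      · exact absurd h hΔ
    have hfac : (δ - 1) * (δ + 1) = 0 := by linear_combination hsq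
    rcases mul_eq_zero.mp hfac with h | h
    · have hδ1 : δ = 1 := by linear_combination h
      left
      exact ⟨r, s, t, u, hδ1, by rw [hA, hδ1, one_mul], by rw [hB, hδ1, one_mul],
        by rw [hC, hδ1, one_mul], by rw [hD, hδ1, one_mul]⟩
    · have hδm : δ = -1 := by linear_combination h
      rw [hδdef] at hδm
      simp only [tA, tB, tC, tD, hδdef] at hA hB hC hD
      right
      refine ⟨-r, s, -t, u, by linear_combination -hδm, ?_, ?_, ?_, ?_⟩
      · simp only [tA]; linear_combination -hA - a₂*hδm
      · simp only [tB]; linear_combination -hB - b₂*hδm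
      · simp only [tC]; linear_combination -hC - c₂*hδm
      · simp only [tD]; linear_combination -hD - d₂*hδm
  · rintro (⟨r, s, t, u, hδ, hA, hB, hC, hD⟩ | ⟨r, s, t, u, hδ, hA, hB, hC, hD⟩)
    · exact ⟨r, s, t, u, by rw [hδ]; exact one_ne_zero,
        by rw [hδ, one_mul]; exact hA, by rw [hδ, one_mul]; exact hB,
        by rw [hδ, one_mul]; exact hC, by rw [hδ, one_mul]; exact hD⟩
    · simp only [tA, tB, tC, tD] at hA hB hC hD
      refine ⟨-r, s, -t, u, ?_, ?_, ?_, ?_, ?_⟩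
      · have hm1 : -r*u - s*(-t) = -1 := by linear_combination -hδ
        rw [hm1]; exact neg_ne_zero.mpr one_ne_zero
      · simp only [tA]; linear_combination -hA + a₂*hδ
      · simp only [tB]; linear_combination -hB + b₂*hδ
      · simp only [tC]; linear_combination -hC + c₂*hδ
      · simp only [tD]; linear_combination -hD + d₂*hδ
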